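/- arXiv:2408.07634 — 2 statements merged into one kernel-verified Lean document; each statement's English description precedes it below -/
import Mathlib

section
/- lim_{d→1^-} (1-d)/2^{1-d} · ∑_{k=1}^∞ (k^d - (k-1)^d)/k = 1. -/
open Filter Set Real Topology

/-!
By the mean value theorem for `x ↦ x ^ d`, the `k`-th summand `(k^d - (k-1)^d)/k` of `A_d` lies
between `d k^(d-2)` and `d (k-1)^(d-2)`, so `d ζ(2-d) ≤ A_d ≤ 1 + d ζ(2-d)`. The same bracketing
applied to the telescoping series `∑ (k^(d-1) - (k+1)^(d-1)) = 1` gives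
`1 ≤ (1-d) ζ(2-d) ≤ 2 - d`. Hence `d ≤ (1-d) A_d ≤ 1 + d(1-d)`, and `2^(1-d) → 1`.
-/

lemma exists_rpow_add_one_sub_rpow_eq (p : ℝ) {a : ℝ} (ha : 0 < a) :
    ∃ c ∈ Icc a (a + 1), (a + 1) ^ p - a ^ p = p * c ^ (p - 1) := by
  have hpos : ∀ x ∈ Icc a (a + 1), x ≠ 0 := fun x hx => (ha.trans_le hx.1).ne'
  obtain ⟨c, hc, hslope⟩ := exists_hasDerivAt_eq_slope (fun x : ℝ => x ^ p)
    (fun x => p * x ^ (p - 1)) (lt_add_one a)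
    (continuousOn_id.rpow_const fun x hx => Or.inl (hpos x hx))
    (fun x hx => hasDerivAt_rpow_const (Or.inl (hpos x (Ioo_subset_Icc_self hx))))
  exact ⟨c, Ioo_subset_Icc_self hc, by simpa using hslope.symm⟩

lemma rpow_sub_one_mem_Icc_of_mem_Icc {p a c : ℝ} (hp : p ≤ 1) (ha : 0 < a)
    (hc : c ∈ Icc a (a + 1)) : c ^ (p - 1) ∈ Icc ((a + 1) ^ (p - 1)) (a ^ (p - 1)) :=
  ⟨rpow_le_rpow_of_nonpos (ha.trans_le hc.1) hc.2 (by linarith),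
    rpow_le_rpow_of_nonpos ha hc.1 (by linarith)⟩

lemma rpow_add_one_sub_rpow_le {p a : ℝ} (hp₀ : 0 ≤ p) (hp₁ : p ≤ 1) (ha : 0 < a) :
    (a + 1) ^ p - a ^ p ≤ p * a ^ (p - 1) := by
  obtain ⟨c, hc, h⟩ := exists_rpow_add_one_sub_rpow_eq p ha
  rw [h]
  exact mul_le_mul_of_nonneg_left (rpow_sub_one_mem_Icc_of_mem_Icc hp₁ ha hc).2 hp₀

lemma mul_rpow_le_rpow_add_one_sub_rpow {p a : ℝ} (hp₀ : 0 ≤ p) (hp₁ : p ≤ 1) (ha : 0 ≤ a) :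
    p * (a + 1) ^ (p - 1) ≤ (a + 1) ^ p - a ^ p := by
  rcases ha.eq_or_lt with rfl | ha
  · rcases hp₀.eq_or_lt with rfl | hp
    · simp
    · simp [zero_rpow hp.ne', hp₁]
  obtain ⟨c, hc, h⟩ := exists_rpow_add_one_sub_rpow_eq p ha
  rw [h]
  exact mul_le_mul_of_nonneg_left (rpow_sub_one_mem_Icc_of_mem_Icc hp₁ ha hc).1 hp₀

lemma rpow_add_one_sub_rpow_le_of_nonpos {p a : ℝ} (hp : p ≤ 0) (ha : 0 < a) :
    (a + 1) ^ p - a ^ p ≤ p * (a + 1) ^ (p - 1) := by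
  obtain ⟨c, hc, h⟩ := exists_rpow_add_one_sub_rpow_eq p ha
  rw [h]
  exact mul_le_mul_of_nonpos_left (rpow_sub_one_mem_Icc_of_mem_Icc (by linarith) ha hc).1 hp

lemma mul_rpow_le_rpow_add_one_sub_rpow_of_nonpos {p a : ℝ} (hp : p ≤ 0) (ha : 0 < a) :
    p * a ^ (p - 1) ≤ (a + 1) ^ p - a ^ p := by
  obtain ⟨c, hc, h⟩ := exists_rpow_add_one_sub_rpow_eq p ha
  rw [h]
  exact mul_le_mul_of_nonpos_left (rpow_sub_one_mem_Icc_of_mem_Icc (by linarith) ha hc).2 hp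

lemma hasSum_sub_succ_of_antitone {f : ℕ → ℝ} (hf : Antitone f) {l : ℝ}
    (hl : Tendsto f atTop (𝓝 l)) : HasSum (fun n => f n - f (n + 1)) (f 0 - l) := by
  rw [hasSum_iff_tendsto_nat_of_nonneg fun n => sub_nonneg.2 (hf n.le_succ)]
  simpa only [Finset.sum_range_sub'] using hl.const_sub (f 0)

lemma summable_nat_add_one_rpow_neg {s : ℝ} (hs : 1 < s) :
    Summable fun n : ℕ => ((n : ℝ) + 1) ^ (-s) := by
  have := (summable_nat_add_iff 1).mpr (summable_nat_rpow.mpr (by linarith : -s < -1))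
  exact_mod_cast this

lemma hasSum_rpow_sub_rpow_succ {s : ℝ} (hs : 1 < s) :
    HasSum (fun n : ℕ => ((n : ℝ) + 1) ^ (1 - s) - ((n : ℝ) + 1 + 1) ^ (1 - s)) 1 := by
  have hanti : Antitone fun n : ℕ => ((n : ℝ) + 1) ^ (1 - s) := fun m n hmn =>
    rpow_le_rpow_of_nonpos (by positivity) (by gcongr) (by linarith)
  have hlim : Tendsto (fun n : ℕ => ((n : ℝ) + 1) ^ (1 - s)) atTop (𝓝 0) := by
    rw [show 1 - s = -(s - 1) by ring]
    exact (tendsto_rpow_neg_atTop (by linarith)).comp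
      (tendsto_atTop_add_const_right _ 1 tendsto_natCast_atTop_atTop)
  simpa using hasSum_sub_succ_of_antitone hanti hlim

lemma one_le_sub_one_mul_tsum_rpow {s : ℝ} (hs : 1 < s) :
    1 ≤ (s - 1) * ∑' n : ℕ, ((n : ℝ) + 1) ^ (-s) := by
  rw [← tsum_mul_left]
  refine hasSum_le (fun n => ?_) (hasSum_rpow_sub_rpow_succ hs)
    ((summable_nat_add_one_rpow_neg hs).mul_left _).hasSum
  have h := mul_rpow_le_rpow_add_one_sub_rpow_of_nonpos (p := 1 - s) (by linarith)
    (by positivity : (0 : ℝ) < n + 1)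
  rw [show 1 - s - 1 = -s by ring] at h
  linarith

lemma sub_one_mul_tsum_rpow_le {s : ℝ} (hs : 1 < s) :
    (s - 1) * ∑' n : ℕ, ((n : ℝ) + 1) ^ (-s) ≤ s := by
  have hshift : Summable fun n : ℕ => ((n : ℝ) + 1 + 1) ^ (-s) := by
    exact_mod_cast (summable_nat_add_iff 1).mpr (summable_nat_add_one_rpow_neg hs)
  have htail : (s - 1) * ∑' n : ℕ, ((n : ℝ) + 1 + 1) ^ (-s) ≤ 1 := by
    rw [← tsum_mul_left]
    refine hasSum_le (fun n => ?_) (hshift.mul_left _).hasSum (hasSum_rpow_sub_rpow_succ hs)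
    have h := rpow_add_one_sub_rpow_le_of_nonpos (p := 1 - s) (by linarith)
      (by positivity : (0 : ℝ) < n + 1)
    rw [show 1 - s - 1 = -s by ring] at h
    linarith
  rw [(summable_nat_add_one_rpow_neg hs).tsum_eq_zero_add]
  push_cast
  simp only [zero_add, one_rpow]
  linarith

/-- `aTerm d k` is the `(k + 1)`-st summand of `A_d`. -/
noncomputable def aTerm (d : ℝ) (k : ℕ) : ℝ := (((k : ℝ) + 1) ^ d - (k : ℝ) ^ d) / ((k : ℝ) + 1)

section aTerm

variable {d : ℝ}

lemma aTerm_nonneg (hd : 0 ≤ d) (k : ℕ) : 0 ≤ aTerm d k :=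
  div_nonneg (sub_nonneg.2 (rpow_le_rpow k.cast_nonneg (by linarith) hd)) (by positivity)

lemma aTerm_zero_le_one : aTerm d 0 ≤ 1 := by
  simp [aTerm, rpow_nonneg le_rfl d]

lemma mul_rpow_le_aTerm (hd₀ : 0 ≤ d) (hd₁ : d ≤ 1) (k : ℕ) :
    d * ((k : ℝ) + 1) ^ (d - 2) ≤ aTerm d k := by
  have hk : (0 : ℝ) < k + 1 := by positivity
  rw [aTerm, le_div_iff₀ hk, show d - 2 = d - 1 - 1 by ring, rpow_sub_one hk.ne', mul_div_assoc',
    div_mul_cancel₀ _ hk.ne']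
  exact mul_rpow_le_rpow_add_one_sub_rpow hd₀ hd₁ k.cast_nonneg

lemma aTerm_succ_le (hd₀ : 0 ≤ d) (hd₁ : d ≤ 1) (k : ℕ) :
    aTerm d (k + 1) ≤ d * ((k : ℝ) + 1) ^ (d - 2) := by
  have hk : (0 : ℝ) < k + 1 := by positivity
  have hstep := rpow_add_one_sub_rpow_le hd₀ hd₁ hk
  rw [show d - 1 = d - 2 + 1 by ring, rpow_add_one hk.ne'] at hstep
  rw [aTerm, div_le_iff₀ (by positivity)]
  push_cast
  calc ((k : ℝ) + 1 + 1) ^ d - ((k : ℝ) + 1) ^ d ≤ d * (((k : ℝ) + 1) ^ (d - 2) * (k + 1)) := hstep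
    _ ≤ d * ((k : ℝ) + 1) ^ (d - 2) * (k + 1 + 1) := by
      rw [← mul_assoc]; gcongr; linarith

lemma summable_rpow_sub_two (hd : d < 1) : Summable fun k : ℕ => ((k : ℝ) + 1) ^ (d - 2) := by
  simpa using summable_nat_add_one_rpow_neg (s := 2 - d) (by linarith)

lemma summable_aTerm (hd₀ : 0 ≤ d) (hd₁ : d < 1) : Summable (aTerm d) :=
  (summable_nat_add_iff 1).mp <| Summable.of_nonneg_of_le (fun k => aTerm_nonneg hd₀ (k + 1))
    (aTerm_succ_le hd₀ hd₁.le) ((summable_rpow_sub_two hd₁).mul_left d)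

lemma mul_tsum_rpow_le_tsum_aTerm (hd₀ : 0 ≤ d) (hd₁ : d < 1) :
    d * ∑' k : ℕ, ((k : ℝ) + 1) ^ (d - 2) ≤ ∑' k, aTerm d k := by
  rw [← tsum_mul_left]
  exact ((summable_rpow_sub_two hd₁).mul_left d).tsum_le_tsum (mul_rpow_le_aTerm hd₀ hd₁.le)
    (summable_aTerm hd₀ hd₁)

lemma tsum_aTerm_le (hd₀ : 0 ≤ d) (hd₁ : d < 1) :
    ∑' k, aTerm d k ≤ 1 + d * ∑' k : ℕ, ((k : ℝ) + 1) ^ (d - 2) := by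
  rw [(summable_aTerm hd₀ hd₁).tsum_eq_zero_add, ← tsum_mul_left]
  exact add_le_add aTerm_zero_le_one <|
    ((summable_nat_add_iff 1).mpr (summable_aTerm hd₀ hd₁)).tsum_le_tsum
      (aTerm_succ_le hd₀ hd₁.le) ((summable_rpow_sub_two hd₁).mul_left d)

lemma one_sub_mul_tsum_aTerm_mem_Icc (hd₀ : 0 ≤ d) (hd₁ : d < 1) :
    (1 - d) * ∑' k, aTerm d k ∈ Icc d (1 + d * (1 - d)) := by
  have hζ := one_le_sub_one_mul_tsum_rpow (s := 2 - d) (by linarith)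
  have hζ' := sub_one_mul_tsum_rpow_le (s := 2 - d) (by linarith)
  rw [neg_sub, show 2 - d - 1 = 1 - d by ring] at hζ hζ'
  have hlow := mul_le_mul_of_nonneg_left (mul_tsum_rpow_le_tsum_aTerm hd₀ hd₁)
    (sub_nonneg.2 hd₁.le)
  have hupp := mul_le_mul_of_nonneg_left (tsum_aTerm_le hd₀ hd₁) (sub_nonneg.2 hd₁.le)
  constructor <;> nlinarith

lemma tendsto_one_sub_mul_tsum_aTerm :
    Tendsto (fun d => (1 - d) * ∑' k, aTerm d k) (𝓝[Ioo 0 1] 1) (𝓝 1) := by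
  have hlow : Tendsto (fun d : ℝ => d) (𝓝[Ioo 0 1] 1) (𝓝 1) :=
    tendsto_nhdsWithin_of_tendsto_nhds tendsto_id
  have hupp : Tendsto (fun d : ℝ => 1 + d * (1 - d)) (𝓝[Ioo 0 1] 1) (𝓝 1) := by
    have hcont : Continuous fun d : ℝ => 1 + d * (1 - d) := by fun_prop
    simpa using tendsto_nhdsWithin_of_tendsto_nhds (hcont.tendsto 1)
  refine tendsto_of_tendsto_of_tendsto_of_le_of_le' hlow hupp ?_ ?_ <;>
    filter_upwards [self_mem_nhdsWithin] with d hd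
  exacts [(one_sub_mul_tsum_aTerm_mem_Icc hd.1.le hd.2).1,
    (one_sub_mul_tsum_aTerm_mem_Icc hd.1.le hd.2).2]

end aTerm

theorem limit_pd_eq_one :
    Filter.Tendsto
      (fun d : ℝ => (1 - d) / 2 ^ (1 - d) *
        ∑' k : ℕ, (((k : ℝ) + 1) ^ d - (k : ℝ) ^ d) / ((k : ℝ) + 1))
      (nhdsWithin 1 (Set.Ioo 0 1)) (nhds 1) := by
  have hpow : Tendsto (fun d : ℝ => (2 : ℝ) ^ (1 - d)) (𝓝[Ioo 0 1] 1) (𝓝 1) := by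
    have hcont : Continuous fun d : ℝ => (2 : ℝ) ^ (1 - d) := by fun_prop (disch := norm_num)
    simpa using tendsto_nhdsWithin_of_tendsto_nhds (hcont.tendsto 1)
  simpa [aTerm, div_mul_eq_mul_div, Pi.div_def] using
    tendsto_one_sub_mul_tsum_aTerm.div hpow one_ne_zero
end

section
/- Let Γ = I \ ∪_{j=1}^∞ I_j be a monotone cut-out set with non-increasing gap lengths (l_j). Then Γ = {y_k : k ≥ 1} ∪ {y_1 + ∑_{j=1}^∞ l_j}, where y_1 = min I and y_{k+1} = y_k + l_k for k ≥ 1. In particular, Γ is countably infinite. -/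
open Set Filter Topology

theorem Monotone.Icc_diff_iUnion_Ioo_succ {α : Type*} [LinearOrder α] [TopologicalSpace α]
    [OrderTopology α] {y : ℕ → α} {L : α} (hy : Monotone y) (hL : Tendsto y atTop (𝓝 L)) :
    Icc (y 0) L \ ⋃ j, Ioo (y j) (y (j + 1)) = range y ∪ {L} := by
  ext x
  constructor
  · rintro ⟨⟨hx0, hxL⟩, hgap⟩
    rcases hxL.eq_or_lt with rfl | hxL
    · exact Or.inr rfl
    obtain ⟨N, hN⟩ := (hL.eventually (eventually_gt_nhds hxL)).exists
    obtain ⟨i, -, hi⟩ := mem_iUnion₂.1 (Ico_subset_biUnion_Ico N y ⟨hx0, hN⟩)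
    rcases eq_left_or_mem_Ioo_of_mem_Ico hi with rfl | hi
    · exact Or.inl ⟨i, rfl⟩
    · exact absurd (mem_iUnion.2 ⟨i, hi⟩) hgap
  · rintro (⟨k, rfl⟩ | rfl)
    · refine ⟨⟨hy k.zero_le, hy.ge_of_tendsto hL k⟩, ?_⟩
      rintro ⟨-, ⟨j, rfl⟩, hj⟩
      have hjk : j < k := hy.reflect_lt hj.1
      have hkj : k < j + 1 := hy.reflect_lt hj.2
      omega
    · refine ⟨⟨hy.ge_of_tendsto hL 0, le_rfl⟩, ?_⟩
      rintro ⟨-, ⟨j, rfl⟩, hj⟩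
      exact (hy.ge_of_tendsto hL (j + 1)).not_gt hj.2

theorem monotone_cutout_characterization_general
    (l : ℕ → ℝ) (hpos : ∀ j, 0 < l j) (hsum : Summable l)
    (u : ℝ) (y : ℕ → ℝ) (hy : ∀ k, y k = u + ∑ j ∈ Finset.range k, l j) :
    Set.Icc u (u + ∑' j, l j) \ (⋃ j, Set.Ioo (y j) (y (j + 1)))
        = {x | ∃ k, x = y k} ∪ {u + ∑' j, l j} ∧
      (Set.Icc u (u + ∑' j, l j) \ (⋃ j, Set.Ioo (y j) (y (j + 1)))).Countable ∧
      (Set.Icc u (u + ∑' j, l j) \ (⋃ j, Set.Ioo (y j) (y (j + 1)))).Infinite := by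
  have hy_succ (k : ℕ) : y (k + 1) = y k + l k := by
    rw [hy, hy, Finset.sum_range_succ, add_assoc]
  have hy_strictMono : StrictMono y :=
    strictMono_nat_of_lt_succ fun k => by linarith [hy_succ k, hpos k]
  have hy_zero : y 0 = u := by simp [hy]
  have hy_lim : Tendsto y atTop (𝓝 (u + ∑' j, l j)) := by
    rw [funext hy]
    exact hsum.hasSum.tendsto_sum_nat.const_add u
  have hgaps := hy_strictMono.monotone.Icc_diff_iUnion_Ioo_succ hy_lim
  have hrange : {x | ∃ k, x = y k} = range y := by
    ext x
    simp [eq_comm]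
  rw [hy_zero] at hgaps
  rw [hgaps, hrange]
  exact ⟨rfl, (countable_range y).union (countable_singleton _),
    (infinite_range_of_injective hy_strictMono.injective).mono subset_union_left⟩

theorem monotone_cutout_characterization
    (l : ℕ → ℝ) (hpos : ∀ j, 0 < l j) (hmono : Antitone l) (hsum : Summable l)
    (u : ℝ) (y : ℕ → ℝ) (hy : ∀ k, y k = u + ∑ j ∈ Finset.range k, l j) :
    Set.Icc u (u + ∑' j, l j) \ (⋃ j, Set.Ioo (y j) (y (j + 1)))
        = {x | ∃ k, x = y k} ∪ {u + ∑' j, l j} ∧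
      (Set.Icc u (u + ∑' j, l j) \ (⋃ j, Set.Ioo (y j) (y (j + 1)))).Countable ∧
      (Set.Icc u (u + ∑' j, l j) \ (⋃ j, Set.Ioo (y j) (y (j + 1)))).Infinite :=
  monotone_cutout_characterization_general l hpos hsum u y hy
end
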